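/- On a cycle C_n attached at a vertex u, if the survivor starts at the vertex clockwise-adjacent to u and repeatedly moves clockwise until returning to u, and a zombie starts at distance at most D behind (clockwise arc distance D ≤ 2^{i+1}−2 where n = 2^{i+2}−3), then at every step of the traversal the zombie never occupies the survivor's vertex. -/

import Mathlib

/-!
On `cyc n` the distance from `a` to `b` is `|valMinAbs (b - a)|`. As long as the survivor's lead
after its move, `d + 1`, is below `n / 2`, the only step that brings the zombie closer is the
clockwise one, so the zombie stays exactly `d` behind and never catches up. In the remaining case
`d = 2 ^ (i + 1) - 2` we have `n = 2 d + 1`: the lead `d + 1` exceeds `n / 2`, the zombie heads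
counterclockwise and meets the survivor head-on, and after `2 ^ i - 1` rounds the survivor steps
onto the zombie's vertex, from which no step can bring the zombie closer: no chase obeys the
rules in that case.
-/

open SimpleGraph

/-- The cycle graph on `ZMod n` with the clockwise orientation `x ↦ x + 1`. -/
def cyc (n : ℕ) : SimpleGraph (ZMod n) :=
  SimpleGraph.fromRel (fun x y => y = x + 1)

namespace cyc

variable {n : ℕ}

lemma adj_add_one [Nontrivial (ZMod n)] (x : ZMod n) : (cyc n).Adj x (x + 1) := by
  simp [cyc]

lemma eq_add_one_or_eq_sub_one_of_adj {x y : ZMod n} (h : (cyc n).Adj x y) :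
    y = x + 1 ∨ y = x - 1 := by
  rw [cyc, fromRel_adj] at h
  exact h.2.imp id fun h' => by rw [h']; ring

lemma natAbs_valMinAbs_one_le : (1 : ZMod n).valMinAbs.natAbs ≤ 1 := by
  rcases n with _ | _ | n
  · simp
  · simp [Subsingleton.elim (1 : ZMod 1) 0]
  · have h := ZMod.valMinAbs_natCast_of_le_half (n := n + 2) (a := 1) (by omega)
    rw [Nat.cast_one] at h
    simp [h]

lemma natAbs_valMinAbs_sub_le_length {a b : ZMod n} (p : (cyc n).Walk a b) :
    (b - a).valMinAbs.natAbs ≤ p.length := by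
  induction p with
  | nil => simp
  | @cons a w b h p ih =>
    have hstep : (w - a).valMinAbs.natAbs ≤ 1 := by
      rcases eq_add_one_or_eq_sub_one_of_adj h with rfl | rfl
      · simpa using natAbs_valMinAbs_one_le
      · simpa [ZMod.natAbs_valMinAbs_neg] using natAbs_valMinAbs_one_le
    calc (b - a).valMinAbs.natAbs = ((b - w) + (w - a)).valMinAbs.natAbs := by ring_nf
      _ ≤ ((b - w).valMinAbs + (w - a).valMinAbs).natAbs := ZMod.natAbs_valMinAbs_add_le _ _
      _ ≤ (b - w).valMinAbs.natAbs + (w - a).valMinAbs.natAbs := Int.natAbs_add_le _ _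
      _ ≤ (p.cons h).length := by rw [Walk.length_cons]; omega

lemma exists_walk_add_natCast [Nontrivial (ZMod n)] (a : ZMod n) (k : ℕ) :
    ∃ p : (cyc n).Walk a (a + k), p.length = k := by
  induction k with
  | zero => exact ⟨Walk.nil.copy rfl (by simp), by simp⟩
  | succ k ih =>
    obtain ⟨p, hp⟩ := ih
    exact ⟨(p.concat (adj_add_one _)).copy rfl (by push_cast; ring), by simp [hp]⟩

lemma dist_eq [Nontrivial (ZMod n)] (a b : ZMod n) :
    (cyc n).dist a b = (b - a).valMinAbs.natAbs := by
  obtain ⟨v, hv⟩ : ∃ v, (b - a).valMinAbs = v := ⟨_, rfl⟩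
  have hb : b = a + (v : ZMod n) := by rw [← hv, ZMod.coe_valMinAbs]; ring
  obtain ⟨p, hp⟩ : ∃ p : (cyc n).Walk a b, p.length = v.natAbs := by
    rcases Int.natAbs_eq v with h | h <;> rw [h] at hb
    · obtain ⟨p, hp⟩ := exists_walk_add_natCast a v.natAbs
      exact ⟨p.copy rfl (by rw [hb, Int.cast_natCast]), by simpa using hp⟩
    · obtain ⟨p, hp⟩ := exists_walk_add_natCast b v.natAbs
      have hba : b + v.natAbs = a := by rw [hb, Int.cast_neg, Int.cast_natCast]; ring
      exact ⟨p.reverse.copy hba rfl, by simpa using hp⟩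
  obtain ⟨q, hq⟩ := p.reachable.exists_walk_length_eq_dist
  rw [hv]
  exact le_antisymm ((dist_le p).trans_eq hp) (hq ▸ hv ▸ natAbs_valMinAbs_sub_le_length q)

lemma dist_add_natCast [Nontrivial (ZMod n)] (a : ZMod n) {k : ℕ} (hk : k < n) :
    (cyc n).dist a (a + k) = min k (n - k) := by
  have : NeZero n := ⟨by omega⟩
  rw [dist_eq, add_sub_cancel_left, ZMod.valMinAbs_natAbs_eq_min, ZMod.val_natCast_of_lt hk]

variable [Nontrivial (ZMod n)]

lemma eq_add_one_of_dist_add_one_eq {z z' : ZMod n} {k : ℕ} (hk : 2 * k < n)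
    (hadj : (cyc n).Adj z z') (hdist : (cyc n).dist z' (z + k) + 1 = (cyc n).dist z (z + k)) :
    z' = z + 1 := by
  have hk0 : k ≠ 0 := by rintro rfl; simp at hdist
  rcases eq_add_one_or_eq_sub_one_of_adj hadj with rfl | rfl
  · rfl
  · have hzk : z + k = z - 1 + ((k + 1 : ℕ) : ZMod n) := by push_cast; ring
    rw [dist_add_natCast z (by omega), hzk, dist_add_natCast _ (by omega)] at hdist
    omega

lemma eq_sub_one_of_dist_add_one_eq {z z' : ZMod n} {k : ℕ} (hk : n < 2 * k) (hkn : k < n)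
    (hadj : (cyc n).Adj z z') (hdist : (cyc n).dist z' (z + k) + 1 = (cyc n).dist z (z + k)) :
    z' = z - 1 := by
  rcases eq_add_one_or_eq_sub_one_of_adj hadj with rfl | rfl
  · have hzk : z + k = z + 1 + ((k - 1 : ℕ) : ZMod n) := by
      rw [Nat.cast_sub (by omega)]; push_cast; ring
    rw [dist_add_natCast z hkn, hzk, dist_add_natCast _ (by omega)] at hdist
    omega
  · rfl

end cyc

def ZombieChases {n : ℕ} (s z : ℕ → ZMod n) : Prop :=
  ∀ t, (cyc n).Adj (z t) (z (t + 1)) ∧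
    (cyc n).dist (z (t + 1)) (s (t + 1)) + 1 = (cyc n).dist (z t) (s (t + 1))

namespace ZombieChases

variable {n : ℕ} {s z : ℕ → ZMod n}

lemma ne_succ (hchase : ZombieChases s z) (t : ℕ) : z t ≠ s (t + 1) := by
  intro h
  have := (hchase t).2
  rw [← h, dist_self] at this
  omega

variable [Nontrivial (ZMod n)] {a : ZMod n} {d : ℕ}

lemma follows_clockwise (hchase : ZombieChases s z) (hs : ∀ t, s t = a + t) (hz0 : z 0 = a - d)
    (hd : 2 * (d + 1) < n) (t : ℕ) : z t = s t - d := by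
  induction t with
  | zero => rw [hz0, hs, Nat.cast_zero, add_zero]
  | succ t ih =>
    obtain ⟨hadj, hdist⟩ := hchase t
    have hst : s (t + 1) = z t + ((d + 1 : ℕ) : ZMod n) := by rw [ih, hs, hs]; push_cast; ring
    rw [hst] at hdist
    rw [cyc.eq_add_one_of_dist_add_one_eq (by omega) hadj hdist, ih, hs, hs]
    push_cast; ring

lemma blocks_survivor (hchase : ZombieChases s z) (hs : ∀ t, s t = a + t) (hz0 : z 0 = a - d)
    {T : ℕ} (hT : d + 2 * T + 1 = n) (hd : n < 2 * (d + 1)) : z T = s (T + 1) := by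
  have hz : ∀ t ≤ T, z t = a - d - t := by
    intro t
    induction t with
    | zero => simp [hz0]
    | succ t ih =>
      intro ht
      obtain ⟨hadj, hdist⟩ := hchase t
      have hst : s (t + 1) = z t + ((d + 2 * t + 1 : ℕ) : ZMod n) := by
        rw [ih (by omega), hs]; push_cast; ring
      rw [hst] at hdist
      rw [cyc.eq_sub_one_of_dist_add_one_eq (by omega) (by omega) hadj hdist, ih (by omega)]
      push_cast; ring
  have hn : ((d + 2 * T + 1 : ℕ) : ZMod n) = 0 := by rw [hT, ZMod.natCast_self]
  push_cast at hn
  rw [hz T le_rfl, hs]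
  push_cast
  linear_combination -hn

end ZombieChases

theorem survivor_circles_safely_general (i d D n : ℕ)
    (hn : n = 2 ^ (i + 2) - 3) (hD : D ≤ 2 ^ (i + 1) - 2) (hd0 : 0 < d) (hdD : d ≤ D)
    (u : ZMod n) (s z : ℕ → ZMod n)
    (hs : ∀ t : ℕ, s t = u + 1 + (t : ZMod n))
    (hz0 : z 0 = u + 1 - (d : ZMod n))
    (hzmove : ∀ t : ℕ, (cyc n).Adj (z t) (z (t + 1)) ∧
      (cyc n).dist (z (t + 1)) (s (t + 1)) + 1 = (cyc n).dist (z t) (s (t + 1))) :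
    ∀ t : ℕ, t ≤ n - 1 → z t ≠ s t := by
  have hpow : 2 ^ (i + 2) = 4 * 2 ^ i ∧ 2 ^ (i + 1) = 2 * 2 ^ i := ⟨by ring, by ring⟩
  have : Fact (1 < n) := ⟨by omega⟩
  intro t _ hzs
  obtain hd | hd : 2 * (d + 1) < n ∨ d + 2 * (2 ^ i - 1) + 1 = n := by omega
  · rw [ZombieChases.follows_clockwise hzmove hs hz0 hd t, sub_eq_self,
      ZMod.natCast_eq_zero_iff] at hzs
    exact absurd (Nat.le_of_dvd hd0 hzs) (by omega)
  · exact ZombieChases.ne_succ hzmove _ (ZombieChases.blocks_survivor hzmove hs hz0 hd (by omega))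

/-- On a cycle of length `n = 2^(i+2) - 3` attached at a vertex `u`, suppose the survivor starts
at the vertex clockwise-adjacent to `u` and repeatedly moves clockwise (`s t = u + 1 + t`), and
a zombie starts at clockwise distance `d` behind with `0 < d ≤ D ≤ 2^(i+1) - 2`
(`z 0 = u + 1 - d`).  If in every round the survivor moves first and then the zombie moves one
step along a shortest path toward the survivor, then throughout the full traversal (until the
survivor returns to `u` at step `n - 1`) the zombie never occupies the survivor's vertex. -/
theorem survivor_circles_safely (i d D n : ℕ) (hi : 1 ≤ i)
    (hn : n = 2 ^ (i + 2) - 3) (hD : D ≤ 2 ^ (i + 1) - 2) (hd0 : 0 < d) (hdD : d ≤ D)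
    (u : ZMod n) (s z : ℕ → ZMod n)
    (hs : ∀ t : ℕ, s t = u + 1 + (t : ZMod n))
    (hz0 : z 0 = u + 1 - (d : ZMod n))
    (hzmove : ∀ t : ℕ, (cyc n).Adj (z t) (z (t + 1)) ∧
      (cyc n).dist (z (t + 1)) (s (t + 1)) + 1 = (cyc n).dist (z t) (s (t + 1))) :
    ∀ t : ℕ, t ≤ n - 1 → z t ≠ s t :=
  survivor_circles_safely_general i d D n hn hD hd0 hdD u s z hs hz0 hzmove
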